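/- arXiv:1307.5709 — 2 statements merged into one kernel-verified Lean document; each statement's English description precedes it below -/
import Mathlib

section
/- Let n ≥ 2, 0 < κ < 1, P ∈ ℝⁿ with P ≠ 0, and κ|P| < b < |P|. For a unit vector x define ρ±(x) = ((b − κ² x·P) ± √(Δ(x·P)))/(1 − κ²), where Δ(t) = (b − κ²t)² − (1 − κ²)(b² − κ²|P|²). Then for every x ∈ S^{n−1}: Δ(x·P) ≥ κ²(x·P − b)² ≥ 0, ρ₋(x) ≤ b < ρ₊(x), and the point X = ρ₋(x)x lies on the Cartesian oval, i.e. |X| + κ|X − P| = b. -/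
open scoped RealInnerProductSpace

/-- The discriminant `Δ(t) = (b − κ²t)² − (1 − κ²)(b² − κ²|P|²)` of the quadratic equation
defining the polar radius of the Cartesian oval `|X| + κ|X − P| = b`. -/
noncomputable def ovalDelta (κ b normP t : ℝ) : ℝ :=
  (b - κ ^ 2 * t) ^ 2 - (1 - κ ^ 2) * (b ^ 2 - κ ^ 2 * normP ^ 2)

/-- The polar radius `h(x,P,b) = ρ₋(x)` of the refracting Cartesian oval (case `κ < 1`). -/
noncomputable def ovalH {n : ℕ} (κ b : ℝ) (P x : EuclideanSpace ℝ (Fin n)) : ℝ :=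
  ((b - κ ^ 2 * ⟪x, P⟫) - Real.sqrt (ovalDelta κ b ‖P‖ ⟪x, P⟫)) / (1 - κ ^ 2)

/-!
With `t = x·P` and `p = |P|`, the discriminant splits as
`Δ(t) = κ²(t − b)² + κ²(1 − κ²)(p² − t²) = κ⁴(t − b)² + κ²(1 − κ²)(p² − 2bt + b²)`,
and both remainders are nonnegative, the second even positive when `0 ≤ b < p`, because `|t| ≤ p`.
So `√Δ > κ²|t − b|`, which places `b` strictly between the two roots `ρ±`. The smaller root is
nonnegative since `Δ ≤ (b − κ²t)²`, and it is at most `b`; squaring `κ|ρx − P| = b − ρ` gives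
back the quadratic, so `ρ₋(x) x` lies on the oval.
-/

section Discriminant

variable {κ b p t : ℝ}

theorem ovalDelta_eq_sq_add (κ b p t : ℝ) :
    ovalDelta κ b p t = κ ^ 2 * (t - b) ^ 2 + κ ^ 2 * (1 - κ ^ 2) * (p ^ 2 - t ^ 2) := by
  unfold ovalDelta; ring

theorem ovalDelta_eq_pow_four_add (κ b p t : ℝ) :
    ovalDelta κ b p t =
      κ ^ 4 * (t - b) ^ 2 + κ ^ 2 * (1 - κ ^ 2) * (p ^ 2 - 2 * b * t + b ^ 2) := by
  unfold ovalDelta; ring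

theorem sq_mul_sq_le_ovalDelta (hκ : κ ^ 2 ≤ 1) (ht : |t| ≤ p) :
    κ ^ 2 * (t - b) ^ 2 ≤ ovalDelta κ b p t := by
  have htp : t ^ 2 ≤ p ^ 2 := sq_abs t ▸ pow_le_pow_left₀ (abs_nonneg t) ht 2
  rw [ovalDelta_eq_sq_add]
  have : 0 ≤ κ ^ 2 * (1 - κ ^ 2) * (p ^ 2 - t ^ 2) := by
    apply mul_nonneg <;> [positivity; linarith]
  linarith

theorem pow_four_mul_sq_lt_ovalDelta (hκ0 : κ ≠ 0) (hκ1 : κ ^ 2 < 1) (hb : 0 ≤ b) (hbp : b < p)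
    (ht : |t| ≤ p) : κ ^ 4 * (t - b) ^ 2 < ovalDelta κ b p t := by
  have hbt : b * t ≤ b * p := mul_le_mul_of_nonneg_left ((le_abs_self t).trans ht) hb
  have hpos : 0 < p ^ 2 - 2 * b * t + b ^ 2 := by nlinarith [pow_pos (sub_pos.2 hbp) 2]
  rw [ovalDelta_eq_pow_four_add]
  have : 0 < κ ^ 2 * (1 - κ ^ 2) * (p ^ 2 - 2 * b * t + b ^ 2) := by
    exact mul_pos (mul_pos (by positivity) (by linarith)) hpos
  linarith

theorem sq_mul_abs_lt_sqrt_ovalDelta (hκ0 : κ ≠ 0) (hκ1 : κ ^ 2 < 1) (hb : 0 ≤ b) (hbp : b < p)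
    (ht : |t| ≤ p) : κ ^ 2 * |t - b| < √(ovalDelta κ b p t) := by
  rw [Real.lt_sqrt (by positivity), mul_pow, sq_abs, ← pow_mul]
  exact pow_four_mul_sq_lt_ovalDelta hκ0 hκ1 hb hbp ht

theorem sqrt_ovalDelta_le (hκ : κ ^ 2 ≤ 1) (hb : κ ^ 2 * p ^ 2 ≤ b ^ 2) (hA : 0 ≤ b - κ ^ 2 * t) :
    √(ovalDelta κ b p t) ≤ b - κ ^ 2 * t := by
  rw [Real.sqrt_le_iff]
  refine ⟨hA, ?_⟩
  unfold ovalDelta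
  nlinarith [mul_nonneg (sub_nonneg.2 hκ) (sub_nonneg.2 hb)]

theorem sub_div_lt_of_sq_mul_abs_lt {s : ℝ} (hκ : κ ^ 2 < 1) (hs : κ ^ 2 * |t - b| < s) :
    ((b - κ ^ 2 * t) - s) / (1 - κ ^ 2) < b := by
  rw [div_lt_iff₀ (by linarith)]
  have : κ ^ 2 * (b - t) ≤ κ ^ 2 * |t - b| :=
    mul_le_mul_of_nonneg_left (abs_sub_comm t b ▸ le_abs_self _) (sq_nonneg κ)
  linarith

theorem lt_add_div_of_sq_mul_abs_lt {s : ℝ} (hκ : κ ^ 2 < 1) (hs : κ ^ 2 * |t - b| < s) :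
    b < ((b - κ ^ 2 * t) + s) / (1 - κ ^ 2) := by
  rw [lt_div_iff₀ (by linarith)]
  have : κ ^ 2 * (t - b) ≤ κ ^ 2 * |t - b| :=
    mul_le_mul_of_nonneg_left (le_abs_self _) (sq_nonneg κ)
  linarith

theorem quadratic_eq_zero_of_sq_eq_ovalDelta {s : ℝ} (hκ : κ ^ 2 ≠ 1)
    (hs : s ^ 2 = ovalDelta κ b p t) :
    (1 - κ ^ 2) * (((b - κ ^ 2 * t) - s) / (1 - κ ^ 2)) ^ 2
      - 2 * (b - κ ^ 2 * t) * (((b - κ ^ 2 * t) - s) / (1 - κ ^ 2))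
      + (b ^ 2 - κ ^ 2 * p ^ 2) = 0 := by
  have hk : 1 - κ ^ 2 ≠ 0 := sub_ne_zero.2 hκ.symm
  unfold ovalDelta at hs
  field_simp
  linear_combination hs

end Discriminant

theorem norm_smul_add_mul_norm_smul_sub_eq {E : Type*} [NormedAddCommGroup E]
    [InnerProductSpace ℝ E] {κ b ρ : ℝ} {x P : E} (hκ : 0 ≤ κ) (hx : ‖x‖ = 1) (hρ0 : 0 ≤ ρ)
    (hρb : ρ ≤ b)
    (hq : (1 - κ ^ 2) * ρ ^ 2 - 2 * (b - κ ^ 2 * ⟪x, P⟫) * ρ + (b ^ 2 - κ ^ 2 * ‖P‖ ^ 2) = 0) :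
    ‖ρ • x‖ + κ * ‖ρ • x - P‖ = b := by
  have hρx : ‖ρ • x‖ = ρ := by rw [norm_smul, hx, mul_one, Real.norm_of_nonneg hρ0]
  have hsq : ‖ρ • x - P‖ ^ 2 = ρ ^ 2 - 2 * ρ * ⟪x, P⟫ + ‖P‖ ^ 2 := by
    rw [norm_sub_sq_real, real_inner_smul_left, hρx]; ring
  have hdist : κ * ‖ρ • x - P‖ = b - ρ := by
    rw [← pow_left_inj₀ (by positivity) (sub_nonneg.2 hρb) two_ne_zero, mul_pow, hsq]
    linear_combination -hq
  rw [hρx, hdist]; ring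

theorem stmt9_general {n : ℕ} (κ : ℝ) (hκ0 : 0 < κ) (hκ1 : κ < 1)
    (P : EuclideanSpace ℝ (Fin n)) (b : ℝ)
    (hb1 : κ * ‖P‖ < b) (hb2 : b < ‖P‖)
    (x : EuclideanSpace ℝ (Fin n)) (hx : ‖x‖ = 1) :
    (0 : ℝ) ≤ κ ^ 2 * (⟪x, P⟫ - b) ^ 2 ∧
    κ ^ 2 * (⟪x, P⟫ - b) ^ 2 ≤ ovalDelta κ b ‖P‖ ⟪x, P⟫ ∧
    ovalH κ b P x ≤ b ∧
    b < ((b - κ ^ 2 * ⟪x, P⟫) + Real.sqrt (ovalDelta κ b ‖P‖ ⟪x, P⟫)) / (1 - κ ^ 2) ∧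
    ‖ovalH κ b P x • x‖ + κ * ‖ovalH κ b P x • x - P‖ = b := by
  have ht : |⟪x, P⟫| ≤ ‖P‖ := by simpa [hx] using abs_real_inner_le_norm x P
  have hκ2 : κ ^ 2 < 1 := by nlinarith
  have hb0 : 0 < b := lt_of_le_of_lt (by positivity) hb1
  have hbp : κ ^ 2 * ‖P‖ ^ 2 ≤ b ^ 2 := by
    rw [← mul_pow]; exact pow_le_pow_left₀ (by positivity) hb1.le 2
  have hA : 0 ≤ b - κ ^ 2 * ⟪x, P⟫ := by
    nlinarith [abs_le.1 ht, mul_le_mul_of_nonneg_right hκ1.le (norm_nonneg P)]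
  have hΔ := sq_mul_sq_le_ovalDelta (b := b) hκ2.le ht
  have hs := sq_mul_abs_lt_sqrt_ovalDelta hκ0.ne' hκ2 hb0.le hb2 ht
  have hρb : ovalH κ b P x ≤ b := (sub_div_lt_of_sq_mul_abs_lt hκ2 hs).le
  have hρ0 : 0 ≤ ovalH κ b P x :=
    div_nonneg (sub_nonneg.2 (sqrt_ovalDelta_le hκ2.le hbp hA)) (by linarith)
  refine ⟨by positivity, hΔ, hρb, lt_add_div_of_sq_mul_abs_lt hκ2 hs, ?_⟩
  exact norm_smul_add_mul_norm_smul_sub_eq hκ0.le hx hρ0 hρb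
    (quadratic_eq_zero_of_sq_eq_ovalDelta hκ2.ne (Real.sq_sqrt (le_trans (by positivity) hΔ)))

/-- Basic properties of the Cartesian oval for `κ < 1`: `Δ(x·P) ≥ κ²(x·P − b)² ≥ 0`,
`ρ₋(x) ≤ b < ρ₊(x)`, and `X = ρ₋(x)x` lies on the oval `|X| + κ|X − P| = b`. -/
theorem stmt9 {n : ℕ} (hn : 2 ≤ n) (κ : ℝ) (hκ0 : 0 < κ) (hκ1 : κ < 1)
    (P : EuclideanSpace ℝ (Fin n)) (hP : P ≠ 0) (b : ℝ)
    (hb1 : κ * ‖P‖ < b) (hb2 : b < ‖P‖)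
    (x : EuclideanSpace ℝ (Fin n)) (hx : ‖x‖ = 1) :
    (0 : ℝ) ≤ κ ^ 2 * (⟪x, P⟫ - b) ^ 2 ∧
    κ ^ 2 * (⟪x, P⟫ - b) ^ 2 ≤ ovalDelta κ b ‖P‖ ⟪x, P⟫ ∧
    ovalH κ b P x ≤ b ∧
    b < ((b - κ ^ 2 * ⟪x, P⟫) + Real.sqrt (ovalDelta κ b ‖P‖ ⟪x, P⟫)) / (1 - κ ^ 2) ∧
    ‖ovalH κ b P x • x‖ + κ * ‖ovalH κ b P x • x - P‖ = b :=
  stmt9_general κ hκ0 hκ1 P b hb1 hb2 x hx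
end

section
/- Let n ≥ 2, 0 < κ < 1, P ∈ ℝⁿ with P ≠ 0, and κ|P| < b < |P|. Then min over x ∈ S^{n−1} of h(x,P,b) equals (b − κ|P|)/(1 + κ), and max over x ∈ S^{n−1} of h(x,P,b) equals (b − κ|P|)/(1 − κ). -/
/-!
Writing `t = ⟪x, P⟫`, the radius `h` depends on `x` only through `t ∈ [-|P|, |P|]`, and both
endpoints are attained on the sphere (at `x = ∓P/|P|`). Put `c = b - κ|P|` and
`A(t) = b - κ²t`. Two polynomial identities,
`(A - (1-κ)c)² - Δ = 2κ²(1-κ)c(t+|P|)` and `Δ - (A - (1+κ)c)² = 2κ²(1+κ)c(|P|-t)`,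
squeeze `√Δ` between `A - (1+κ)c` and `A - (1-κ)c` on that interval, i.e.
`c/(1+κ) ≤ h ≤ c/(1-κ)`, with equality at `t = -|P|` and at `t = |P|` respectively.
-/

open scoped RealInnerProductSpace

noncomputable def ovalRadius (κ b p t : ℝ) : ℝ :=
  ((b - κ ^ 2 * t) - √(ovalDelta κ b p t)) / (1 - κ ^ 2)

theorem ovalH_eq_ovalRadius {n : ℕ} (κ b : ℝ) (P x : EuclideanSpace ℝ (Fin n)) :
    ovalH κ b P x = ovalRadius κ b ‖P‖ ⟪x, P⟫ :=
  rfl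

section OvalRadius

variable {κ b p t : ℝ}

theorem ovalRadius_self (hκ0 : 0 ≤ κ) (hκ1 : κ < 1) (hb : b ≤ p) :
    ovalRadius κ b p p = (b - κ * p) / (1 - κ) := by
  have hΔ : ovalDelta κ b p p = (κ * (p - b)) ^ 2 := by unfold ovalDelta; ring
  have hκ : 1 - κ ^ 2 ≠ 0 := by nlinarith
  rw [ovalRadius, hΔ, Real.sqrt_sq (mul_nonneg hκ0 (sub_nonneg.2 hb)),
    div_eq_div_iff hκ (sub_ne_zero.2 hκ1.ne')]
  ring

theorem ovalRadius_neg_self (hκ0 : 0 ≤ κ) (hκ1 : κ < 1) (hb : 0 ≤ p + b) :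
    ovalRadius κ b p (-p) = (b - κ * p) / (1 + κ) := by
  have hΔ : ovalDelta κ b p (-p) = (κ * (p + b)) ^ 2 := by unfold ovalDelta; ring
  have hκ : 1 - κ ^ 2 ≠ 0 := by nlinarith
  rw [ovalRadius, hΔ, Real.sqrt_sq (mul_nonneg hκ0 hb),
    div_eq_div_iff hκ (by linarith)]
  ring

theorem sq_sub_ovalDelta (κ b p t : ℝ) :
    ((b - κ ^ 2 * t) - (1 - κ) * (b - κ * p)) ^ 2 - ovalDelta κ b p t
      = 2 * κ ^ 2 * (1 - κ) * (b - κ * p) * (t + p) := by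
  unfold ovalDelta; ring

theorem ovalDelta_sub_sq (κ b p t : ℝ) :
    ovalDelta κ b p t - ((b - κ ^ 2 * t) - (1 + κ) * (b - κ * p)) ^ 2
      = 2 * κ ^ 2 * (1 + κ) * (b - κ * p) * (p - t) := by
  unfold ovalDelta; ring

theorem div_one_add_le_ovalRadius (hκ0 : 0 ≤ κ) (hκ1 : κ < 1) (hb : κ * p ≤ b)
    (ht : |t| ≤ p) : (b - κ * p) / (1 + κ) ≤ ovalRadius κ b p t := by
  obtain ⟨htl, htu⟩ := abs_le.mp ht
  have hsqrt : √(ovalDelta κ b p t) ≤ (b - κ ^ 2 * t) - (1 - κ) * (b - κ * p) := by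
    have hrhs : (b - κ ^ 2 * t) - (1 - κ) * (b - κ * p) = κ * ((b - κ * t) + (1 - κ) * p) := by
      ring
    have hκt : κ * t ≤ κ * p := mul_le_mul_of_nonneg_left htu hκ0
    have hκp : 0 ≤ (1 - κ) * p := mul_nonneg (by linarith) (by linarith)
    refine Real.sqrt_le_iff.mpr ⟨hrhs ▸ mul_nonneg hκ0 (by linarith), ?_⟩
    have hgap : 0 ≤ 2 * κ ^ 2 * (1 - κ) * (b - κ * p) * (t + p) :=
      mul_nonneg (mul_nonneg (mul_nonneg (by positivity) (by linarith)) (by linarith))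
        (by linarith)
    linarith [sq_sub_ovalDelta κ b p t]
  have hκ : 0 < 1 - κ ^ 2 := by nlinarith
  calc (b - κ * p) / (1 + κ) = (1 - κ) * (b - κ * p) / (1 - κ ^ 2) := by
        field_simp [(by linarith : (1 : ℝ) + κ ≠ 0)]; ring
    _ ≤ ovalRadius κ b p t := by
        unfold ovalRadius
        exact div_le_div_of_nonneg_right (by linarith) hκ.le

theorem ovalRadius_le_div_one_sub (hκ0 : 0 ≤ κ) (hκ1 : κ < 1) (hb : κ * p ≤ b)
    (ht : t ≤ p) : ovalRadius κ b p t ≤ (b - κ * p) / (1 - κ) := by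
  have hsqrt : (b - κ ^ 2 * t) - (1 + κ) * (b - κ * p) ≤ √(ovalDelta κ b p t) := by
    refine Real.le_sqrt_of_sq_le ?_
    have hgap : 0 ≤ 2 * κ ^ 2 * (1 + κ) * (b - κ * p) * (p - t) :=
      mul_nonneg (mul_nonneg (mul_nonneg (by positivity) (by linarith)) (by linarith))
        (by linarith)
    linarith [ovalDelta_sub_sq κ b p t]
  have hκ : 0 < 1 - κ ^ 2 := by nlinarith
  calc ovalRadius κ b p t ≤ (1 + κ) * (b - κ * p) / (1 - κ ^ 2) := by
        unfold ovalRadius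
        exact div_le_div_of_nonneg_right (by linarith) hκ.le
    _ = (b - κ * p) / (1 - κ) := by
        field_simp [(by linarith : (1 : ℝ) - κ ≠ 0)]; ring

end OvalRadius

theorem stmt10_general {n : ℕ} (κ : ℝ) (hκ0 : 0 < κ) (hκ1 : κ < 1)
    (P : EuclideanSpace ℝ (Fin n)) (b : ℝ)
    (hb1 : κ * ‖P‖ < b) (hb2 : b < ‖P‖) :
    IsLeast {r : ℝ | ∃ x : EuclideanSpace ℝ (Fin n), ‖x‖ = 1 ∧ ovalH κ b P x = r}
      ((b - κ * ‖P‖) / (1 + κ)) ∧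
    IsGreatest {r : ℝ | ∃ x : EuclideanSpace ℝ (Fin n), ‖x‖ = 1 ∧ ovalH κ b P x = r}
      ((b - κ * ‖P‖) / (1 - κ)) := by
  have hp : 0 < ‖P‖ := by nlinarith
  set u : EuclideanSpace ℝ (Fin n) := ‖P‖⁻¹ • P
  have hu : ‖u‖ = 1 := norm_smul_inv_norm (norm_pos_iff.mp hp)
  have huP : ⟪u, P⟫ = ‖P‖ := by
    rw [real_inner_smul_left, real_inner_self_eq_norm_sq]; field_simp
  have hinner (x : EuclideanSpace ℝ (Fin n)) (hx : ‖x‖ = 1) : |⟪x, P⟫| ≤ ‖P‖ :=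
    (abs_real_inner_le_norm x P).trans_eq (by rw [hx, one_mul])
  refine ⟨⟨⟨-u, by rw [norm_neg, hu], ?_⟩, ?_⟩, ⟨⟨u, hu, ?_⟩, ?_⟩⟩
  · rw [ovalH_eq_ovalRadius, inner_neg_left, huP,
      ovalRadius_neg_self hκ0.le hκ1 (by linarith [mul_pos hκ0 hp])]
  · rintro _ ⟨x, hx, rfl⟩
    exact div_one_add_le_ovalRadius hκ0.le hκ1 hb1.le (hinner x hx)
  · rw [ovalH_eq_ovalRadius, huP, ovalRadius_self hκ0.le hκ1 hb2.le]
  · rintro _ ⟨x, hx, rfl⟩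
    exact ovalRadius_le_div_one_sub hκ0.le hκ1 hb1.le (abs_le.mp (hinner x hx)).2

/-- Lemma 4.1, first part: the minimum and maximum of `h(·,P,b)` over the unit sphere. -/
theorem stmt10 {n : ℕ} (hn : 2 ≤ n) (κ : ℝ) (hκ0 : 0 < κ) (hκ1 : κ < 1)
    (P : EuclideanSpace ℝ (Fin n)) (hP : P ≠ 0) (b : ℝ)
    (hb1 : κ * ‖P‖ < b) (hb2 : b < ‖P‖) :
    IsLeast {r : ℝ | ∃ x : EuclideanSpace ℝ (Fin n), ‖x‖ = 1 ∧ ovalH κ b P x = r}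
      ((b - κ * ‖P‖) / (1 + κ)) ∧
    IsGreatest {r : ℝ | ∃ x : EuclideanSpace ℝ (Fin n), ‖x‖ = 1 ∧ ovalH κ b P x = r}
      ((b - κ * ‖P‖) / (1 - κ)) :=
  stmt10_general κ hκ0 hκ1 P b hb1 hb2
end
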